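/- The Artin automorphisms r(σᵢ) of the free group Fₙ satisfy the braid relations: r(σᵢ)∘r(σᵢ₊₁)∘r(σᵢ) = r(σᵢ₊₁)∘r(σᵢ)∘r(σᵢ₊₁) for 1 ≤ i ≤ n−2, and r(σᵢ)∘r(σⱼ) = r(σⱼ)∘r(σᵢ) whenever |i−j| ≥ 2. -/
import Mathlib


open FreeGroup

set_option maxRecDepth 8000

/-- The Artin endomorphism `r(σᵢ)` of the free group on `n` generators:
`xᵢ ↦ xᵢxᵢ₊₁xᵢ⁻¹`, `xᵢ₊₁ ↦ xᵢ`, and `xₖ ↦ xₖ` otherwise. -/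
def artinMap (n i : ℕ) (h : i + 1 < n) : FreeGroup (Fin n) →* FreeGroup (Fin n) :=
  FreeGroup.lift fun k =>
    if k.val = i then
      FreeGroup.of ⟨i, Nat.lt_of_succ_lt h⟩ * FreeGroup.of ⟨i + 1, h⟩ *
        (FreeGroup.of ⟨i, Nat.lt_of_succ_lt h⟩)⁻¹
    else if k.val = i + 1 then FreeGroup.of ⟨i, Nat.lt_of_succ_lt h⟩
    else FreeGroup.of k

lemma artin_of (n i : ℕ) (h : i + 1 < n) (v : ℕ) (hv : v < n) :
    artinMap n i h (FreeGroup.of ⟨v, hv⟩) =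
    if v = i then
      FreeGroup.of ⟨i, Nat.lt_of_succ_lt h⟩ * FreeGroup.of ⟨i + 1, h⟩ *
        (FreeGroup.of ⟨i, Nat.lt_of_succ_lt h⟩)⁻¹
    else if v = i + 1 then FreeGroup.of ⟨i, Nat.lt_of_succ_lt h⟩
    else FreeGroup.of ⟨v, hv⟩ := by
  simp [artinMap]

theorem artinMap_braid_relations (n : ℕ) :
    (∀ i : ℕ, (h : i + 2 < n) →
      (artinMap n i (Nat.lt_of_succ_lt h)).comp
          ((artinMap n (i + 1) h).comp (artinMap n i (Nat.lt_of_succ_lt h))) =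
        (artinMap n (i + 1) h).comp
          ((artinMap n i (Nat.lt_of_succ_lt h)).comp (artinMap n (i + 1) h))) ∧
    (∀ i j : ℕ, (hi : i + 1 < n) → (hj : j + 1 < n) →
      (i + 2 ≤ j ∨ j + 2 ≤ i) →
      (artinMap n i hi).comp (artinMap n j hj) =
        (artinMap n j hj).comp (artinMap n i hi)) := by
  constructor
  · intro i h
    ext ⟨v, hv⟩
    simp only [MonoidHom.comp_apply]
    rcases eq_or_ne v i with h1 | h1
    · simp [artin_of, _root_.map_mul, _root_.map_inv, h1,
        show i ≠ i + 1 by omega, show i ≠ i + 1 + 1 by omega, show i ≠ i + 2 by omega,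
        show i + 1 ≠ i + 1 + 1 by omega, show i + 1 + 1 ≠ i by omega,
        show ¬ i + 1 = i by omega, show ¬ i + 1 + 1 = i + 1 by omega, mul_assoc]
    rcases eq_or_ne v (i+1) with h2 | h2
    · simp [artin_of, _root_.map_mul, _root_.map_inv, h1, h2,
        show i ≠ i + 1 by omega, show i ≠ i + 1 + 1 by omega, show i ≠ i + 2 by omega,
        show i + 1 ≠ i + 1 + 1 by omega, show i + 1 + 1 ≠ i by omega,
        show ¬ i + 1 = i by omega, show ¬ i + 1 + 1 = i + 1 by omega, mul_assoc]
    rcases eq_or_ne v (i+2) with h3 | h3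
    · simp [artin_of, _root_.map_mul, _root_.map_inv, h1, h2, h3,
        show i ≠ i + 1 by omega, show i ≠ i + 1 + 1 by omega, show i ≠ i + 2 by omega,
        show i + 2 = i + 1 + 1 by omega,
        show i + 1 ≠ i + 1 + 1 by omega, show i + 1 + 1 ≠ i by omega,
        show ¬ i + 1 = i by omega, show ¬ i + 1 + 1 = i + 1 by omega, mul_assoc]
    · have h3' : v ≠ i + 1 + 1 := by omega
      simp [artin_of, _root_.map_mul, _root_.map_inv, h1, h2, h3, h3',
        show ¬ i + 1 = i by omega, mul_assoc]
  · intro i j hi hj hij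
    ext ⟨v, hv⟩
    simp only [MonoidHom.comp_apply]
    have F1 : i ≠ j := by omega
    have F2 : i ≠ j + 1 := by omega
    have F3 : i + 1 ≠ j := by omega
    have F4 : i + 1 ≠ j + 1 := by omega
    have F5 : j ≠ i := by omega
    have F6 : j ≠ i + 1 := by omega
    have F7 : j + 1 ≠ i := by omega
    have F8 : j + 1 ≠ i + 1 := by omega
    rcases eq_or_ne v i with h1 | h1
    · simp [artin_of, _root_.map_mul, _root_.map_inv, h1,
        F1, F2, F3, F4, F5, F6, F7, F8, mul_assoc]
    rcases eq_or_ne v (i+1) with h2 | h2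
    · simp [artin_of, _root_.map_mul, _root_.map_inv, h2,
        F1, F2, F3, F4, F5, F6, F7, F8, h1, mul_assoc]
    rcases eq_or_ne v j with h3 | h3
    · simp [artin_of, _root_.map_mul, _root_.map_inv, h3,
        F1, F2, F3, F4, F5, F6, F7, F8, h1, h2, mul_assoc]
    rcases eq_or_ne v (j+1) with h4 | h4
    · simp [artin_of, _root_.map_mul, _root_.map_inv, h4,
        F1, F2, F3, F4, F5, F6, F7, F8, h1, h2, h3, mul_assoc]
    · simp [artin_of, _root_.map_mul, _root_.map_inv,
        F1, F2, F3, F4, F5, F6, F7, F8, h1, h2, h3, h4, mul_assoc]
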